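/- Fix α ∈ (0,1). Under the simultaneous Doeblin condition there exists a constant B₀ > 0 such that for every x ∈ S and every policy π ∈ 𝒫, E_x^π[ exp( λα Σ_{t=0}^{T−1} (C(X_t,A_t) − J*(λ,X_t)) ) ] ≥ B₀, where T is the first positive arrival time to z. -/

import Mathlib

open scoped Classical BigOperators ENNReal

namespace RiskSensitive

/-- A (history-dependent, randomized) policy for a finite MDP: given the past
(chronological list of (state, action) pairs) and the current state, it assigns a
probability weight to each action, concentrated on the admissible actions. -/
structure Policy (S A : Type*) [Fintype S] [Fintype A] (Adm : S → Finset A) where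
  toFun : List (S × A) → S → A → ℝ
  nonneg : ∀ h s a, 0 ≤ toFun h s a
  sum_one : ∀ h s, ∑ a, toFun h s a = 1
  supp : ∀ h s a, a ∉ Adm s → toFun h s a = 0

variable {S A : Type*} [Fintype S] [Fintype A]
variable (Adm : S → Finset A) (p : S → A → S → ℝ) (C : S → A → ℝ) (lam : ℝ)

/-- Probability of a finite trajectory (list of (action, next-state) pairs), given the
history so far and the current state. -/
noncomputable def pathProbAux (π : Policy S A Adm) :
    List (S × A) → S → List (A × S) → ℝ
  | _, _, [] => 1
  | hist, x, (a, y) :: rest =>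
      π.toFun hist x a * p x a y * pathProbAux π (hist ++ [(x, a)]) y rest

/-- `pathProb π x l` is `P_x^π[A_0 = a_0, X_1 = y_1, …]` for `l = [(a_0,y_1),…]`. -/
noncomputable def pathProb (π : Policy S A Adm) (x : S) (l : List (A × S)) : ℝ :=
  pathProbAux Adm p π [] x l

/-- Probability of a cylinder event depending on the first `n` (action, next-state) pairs. -/
noncomputable def cylProb (π : Policy S A Adm) (x : S) (n : ℕ)
    (E : (Fin n → A × S) → Prop) : ℝ :=
  ∑ v : Fin n → A × S, if E v then pathProb Adm p π x (List.ofFn v) else 0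

/-- The state `X_t` along the trajectory encoded by `l`, starting from `x`. -/
def stateAt (x : S) (l : List (A × S)) (t : ℕ) : S :=
  (l.take t).foldl (fun _ q => q.2) x

/-- The final state of the finite trajectory `l` started at `x`. -/
def lastState (x : S) (l : List (A × S)) : S :=
  l.foldl (fun _ q => q.2) x

/-- `Σ_t w(X_t, A_t)` along the finite trajectory `l` started at `x`. -/
def costSum (w : S → A → ℝ) : S → List (A × S) → ℝ
  | _, [] => 0
  | x, (a, y) :: rest => w x a + costSum w y rest

/-- `J_n(λ,π,x) = (1/λ) log E_x^π[exp(λ Σ_{t<n} C(X_t,A_t))]`. -/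
noncomputable def Jn (π : Policy S A Adm) (x : S) (n : ℕ) : ℝ :=
  (1 / lam) * Real.log (∑ v : Fin n → A × S,
    pathProb Adm p π x (List.ofFn v) * Real.exp (lam * costSum C x (List.ofFn v)))

/-- The risk-sensitive average cost `J(λ,π,x) = limsup_n J_n(λ,π,x)/n`. -/
noncomputable def Javg (π : Policy S A Adm) (x : S) : ℝ :=
  Filter.limsup (fun n : ℕ => Jn Adm p C lam π x n / n) Filter.atTop

/-- Optimal risk-sensitive average cost `J*(λ,x)`. -/
noncomputable def Jopt (x : S) : ℝ :=
  ⨅ π : Policy S A Adm, Javg Adm p C lam π x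

/-- `π` is `ε`-optimal at `x`. -/
def EpsOptimalAt (π : Policy S A Adm) (x : S) (ε : ℝ) : Prop :=
  Javg Adm p C lam π x ≤ Jopt Adm p C lam x + ε

/-- `FirstExit Q v` : the trajectory `v` leaves `{Q}` for the first time exactly at its
last step, i.e. the exit time of `Q` equals `n`. -/
def FirstExit (Q : S → Prop) {n : ℕ} (v : Fin n → A × S) : Prop :=
  0 < n ∧ (∀ t : Fin n, (t : ℕ) + 1 < n → Q (v t).2) ∧
    ∀ t : Fin n, (t : ℕ) + 1 = n → ¬ Q (v t).2

/-- `E_x^π[ exp(Σ_{t<τ} w(X_t,A_t)) ]` where `τ = min{n ≥ 1 : ¬ Q (X_n)}` is the first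
exit time from `Q` (the contribution of `[τ = ∞]` is null when `τ < ∞` a.s.). -/
noncomputable def EexitExp (π : Policy S A Adm) (x : S) (Q : S → Prop)
    (w : S → A → ℝ) : ℝ≥0∞ :=
  ∑' n : ℕ, ∑ v : Fin n → A × S,
    if FirstExit Q v then
      ENNReal.ofReal (pathProb Adm p π x (List.ofFn v) *
        Real.exp (costSum w x (List.ofFn v)))
    else 0

/-- `E_x^π[ exp(Σ_{t<T} w(X_t,A_t)) ]` with `T` the first positive arrival time to `z`. -/
noncomputable def EhitExp (π : Policy S A Adm) (x z : S) (w : S → A → ℝ) : ℝ≥0∞ :=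
  EexitExp Adm p π x (fun y => y ≠ z) w

/-- `E_x^π[T]`, the expected first positive arrival time to `z`, computed as
`Σ_{n≥0} P_x^π[T > n]`. -/
noncomputable def ExpT (π : Policy S A Adm) (x z : S) : ℝ≥0∞ :=
  ∑' n : ℕ, ENNReal.ofReal
    (cylProb Adm p π x n (fun v => ∀ t : Fin n, (v t).2 ≠ z))

/-- `P_x^π[T > n]`, the probability that `z` is not visited during the first `n` steps. -/
noncomputable def survProb (π : Policy S A Adm) (x z : S) (n : ℕ) : ℝ :=
  cylProb Adm p π x n (fun v => ∀ t : Fin n, (v t).2 ≠ z)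

/-- The stationary policy induced by a choice function `f ∈ 𝔽`. -/
noncomputable def stationary (f : S → A) (hf : ∀ s, f s ∈ Adm s) : Policy S A Adm where
  toFun := fun _ s a => if a = f s then 1 else 0
  nonneg := by intro h s a; (try dsimp only); split <;> norm_num
  sum_one := by intro h s; simp
  supp := by
    intro h s a ha
    try dsimp only
    rw [if_neg]
    intro hEq
    exact ha (hEq ▸ hf s)

/-- The simultaneous Doeblin condition: `E_x^f[T] ≤ M` for every state `x` and every
stationary policy `f`, where `T` is the first positive arrival time to `z`. -/
def Doeblin (z : S) (M : ℝ) : Prop :=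
  0 < M ∧ ∀ (x : S) (f : S → A) (hf : ∀ s, f s ∈ Adm s),
    ExpT Adm p (stationary Adm f hf) x z ≤ ENNReal.ofReal M

/-- `B_g(x) = {a ∈ A(x) : g(x) = max{g(y) : p_{xy}(a) > 0}}`. -/
def Bg (g : S → ℝ) (x : S) : Set A :=
  {a | a ∈ Adm x ∧ g x = sSup (g '' {y | 0 < p x a y})}

/-- The family `𝒢` of functions characterizing `J*(λ,·)`. -/
def Gclass : Set (S → ℝ) :=
  {g | (∀ x, g x = sInf ((fun a => sSup (g '' {y | 0 < p x a y})) '' (Adm x : Set A))) ∧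
    ∃ h : S → ℝ, ∀ x,
      sInf ((fun a => Real.exp (lam * C x a) * ∑ y, p x a y * Real.exp (lam * h y)) ''
        Bg Adm p g x) ≤ Real.exp (lam * g x + lam * h x)}

/-- The class `𝒫*` of policies which always select actions in `B*(X_t)`. -/
def Pstar : Set (Policy S A Adm) :=
  {π | ∀ (x : S) (t : ℕ),
    cylProb Adm p π x (t + 1)
      (fun v => (v (Fin.last t)).1 ∈
        Bg Adm p (Jopt Adm p C lam) (stateAt x (List.ofFn v) t)) = 1}

/-- The deviation function
`h(x) = inf_{π ∈ 𝒫*} (1/λ) log E_x^π[exp(λα Σ_{t<T}(C(X_t,A_t) − J*(λ,X_t)))]`. -/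
noncomputable def hdev (z : S) (α : ℝ) (x : S) : EReal :=
  ⨅ π ∈ Pstar Adm p C lam, ((lam⁻¹ : ℝ) : EReal) *
    ENNReal.log (EhitExp Adm p π x z
      (fun s a => lam * α * (C s a - Jopt Adm p C lam s)))

/-- `ψ(ε) = (1/λ) inf_{δ∈𝒫*} log E_z^δ[exp(λ Σ_{t<T}(C(X_t,A_t) − γ₀ − 2ε))]`. -/
noncomputable def psi (z : S) (ε : ℝ) : EReal :=
  ((lam⁻¹ : ℝ) : EReal) * ⨅ π ∈ Pstar Adm p C lam,
    ENNReal.log (EhitExp Adm p π z z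
      (fun s a => lam * (C s a - Jopt Adm p C lam z - 2 * ε)))

/-- `ξ₀ = −(1−α) log β / (λα)`. -/
noncomputable def xi0 (α β : ℝ) : ℝ := -((1 - α) * Real.log β) / (lam * α)

/-- `ξ₁`: 1 if `J*(λ,·)` is constant, otherwise the minimum gap between distinct
values of `J*(λ,·)`. -/
noncomputable def xi1 : ℝ :=
  if ∀ u v : S, Jopt Adm p C lam u = Jopt Adm p C lam v then 1
  else sInf {d | ∃ u v : S, Jopt Adm p C lam u < Jopt Adm p C lam v ∧
    d = Jopt Adm p C lam v - Jopt Adm p C lam u}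

/-- `ξ = min{ξ₀, ξ₁}`. -/
noncomputable def xi (α β : ℝ) : ℝ := min (xi0 lam α β) (xi1 Adm p C lam)

/-- The shifted policy obtained by prefixing the fixed history `pre`. -/
def shiftPolicy (π : Policy S A Adm) (pre : List (S × A)) : Policy S A Adm where
  toFun := fun h s a => π.toFun (pre ++ h) s a
  nonneg := fun h s a => π.nonneg _ s a
  sum_one := fun h s => π.sum_one _ s
  supp := fun h s a ha => π.supp _ s a ha

/-- The history (list of (state, action) pairs) along the trajectory `l` started at `x`. -/
def histOf : S → List (A × S) → List (S × A)
  | _, [] => []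
  | x, (a, y) :: rest => (x, a) :: histOf y rest

end RiskSensitive

/-!
Under the Doeblin condition, Markov's inequality gives `P_x^f[T > N] ≤ M / (N + 1)` for every
stationary `f`. To make this uniform over all policies, run value iteration for the survival
probability: the iterates `u_N = 𝒯^N 1` of the Bellman operator
`𝒯 u (x) = max_{a ∈ A(x)} Σ_{y ≠ z} p_{xy}(a) u(y)` dominate `P_x^π[T > N]` for every `π`, and
decrease to a fixed point `v` of `𝒯`. A selector `f` attaining the maxima in `𝒯 v = v` is a
stationary policy with `v ≤ P^f[T > N] ≤ M / (N + 1)`, so `v = 0`. Hence there is one `N` with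
`P_x^π[T ≤ N] ≥ 1/2` for all `x` and `π`. On `{T ≤ N}` the exponent is at least `L N` for any
lower bound `L ≤ 0` of the finitely many values of `λα (C − J*)`, so `B₀ = e^{L N} / 2` works.
-/

namespace RiskSensitive

open Filter Topology

variable {S A : Type*}

lemma firstExit_cons_iff {z : S} {n : ℕ} (hn : 0 < n) (q : A × S) (v : Fin n → A × S) :
    FirstExit (fun y => y ≠ z) (Fin.cons q v) ↔ q.2 ≠ z ∧ FirstExit (fun y => y ≠ z) v := by
  unfold FirstExit
  simp only [Fin.forall_fin_succ, Fin.cons_zero, Fin.cons_succ, Fin.val_zero, Fin.val_succ]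
  constructor
  · rintro ⟨-, ⟨hq, hpre⟩, -, hlast⟩
    exact ⟨hq (by omega), hn, fun t ht => hpre t (by omega), fun t ht => hlast t (by omega)⟩
  · rintro ⟨hq, -, hpre, hlast⟩
    exact ⟨n.succ_pos, ⟨fun _ => hq, fun t ht => hpre t (by omega)⟩,
      fun h => absurd h (by omega), fun t ht => hlast t (by omega)⟩

lemma mul_length_le_costSum {w : S → A → ℝ} {L : ℝ} (hw : ∀ s a, L ≤ w s a) :
    ∀ (x : S) (l : List (A × S)), L * l.length ≤ costSum w x l
  | _, [] => by simp [costSum]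
  | x, (a, y) :: l => by
      have hl := mul_length_le_costSum hw y l
      simp only [costSum, List.length_cons, Nat.cast_succ]
      linarith [hw x a]

section Bellman

variable [Fintype S]

def IsStochastic (Adm : S → Finset A) (p : S → A → S → ℝ) : Prop :=
  ∀ x, ∀ a ∈ Adm x, (∀ y, 0 ≤ p x a y) ∧ ∑ y, p x a y = 1

/-- One step of value iteration for the maximal probability of avoiding `z`. -/
noncomputable def survBellman (Adm : S → Finset A) (p : S → A → S → ℝ)
    (hA : ∀ x, (Adm x).Nonempty) (z : S) (u : S → ℝ) (x : S) : ℝ :=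
  (Adm x).sup' (hA x) fun a => ∑ y, if y = z then 0 else p x a y * u y

variable {Adm : S → Finset A} {p : S → A → S → ℝ} {hA : ∀ x, (Adm x).Nonempty} {z : S}

lemma survBellman_zero : survBellman Adm p hA z 0 = 0 := by
  funext x
  simp [survBellman]

lemma monotone_survBellman (hp : IsStochastic Adm p) : Monotone (survBellman Adm p hA z) :=
  fun u v huv x => Finset.sup'_mono_fun fun a ha => Finset.sum_le_sum fun y _ => by
    split_ifs
    · rfl
    · exact mul_le_mul_of_nonneg_left (huv y) ((hp x a ha).1 y)

lemma survBellman_one_le (hp : IsStochastic Adm p) : survBellman Adm p hA z 1 ≤ 1 :=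
  fun x => Finset.sup'_le _ _ fun a ha => by
    calc ∑ y, (if y = z then 0 else p x a y * (1 : S → ℝ) y)
        ≤ ∑ y, p x a y := Finset.sum_le_sum fun y _ => by
          split_ifs
          · exact (hp x a ha).1 y
          · simp
      _ = 1 := (hp x a ha).2

lemma continuous_survBellman : Continuous (survBellman Adm p hA z) := by
  refine continuous_pi fun x => Continuous.finset_sup'_apply (hA x) fun a _ => ?_
  refine continuous_finsetSum _ fun y _ => ?_
  split_ifs
  · exact continuous_const
  · exact continuous_const.mul (continuous_apply y)

lemma exists_maximizer_of_isFixedPt {v : S → ℝ}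
    (hv : Function.IsFixedPt (survBellman Adm p hA z) v) :
    ∃ f : S → A, (∀ s, f s ∈ Adm s) ∧
      ∀ x, v x = ∑ y, if y = z then 0 else p x (f x) y * v y := by
  have hsel : ∀ x, ∃ a ∈ Adm x, v x = ∑ y, if y = z then 0 else p x a y * v y := fun x => by
    obtain ⟨a, ha, hmax⟩ := Finset.exists_mem_eq_sup' (hA x)
      fun a => ∑ y, if y = z then 0 else p x a y * v y
    exact ⟨a, ha, (congrFun hv x).symm.trans hmax⟩
  choose f hf hfv using hsel
  exact ⟨f, hf, hfv⟩

end Bellman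

section Policies

variable [Fintype S] [Fintype A] {Adm : S → Finset A} {p : S → A → S → ℝ}

variable (Adm p) in
/-- `P_x^π[A_0 = a, X_1 = y]` for `q = (a, y)`. -/
noncomputable def stepProb (π : Policy S A Adm) (x : S) (q : A × S) : ℝ :=
  π.toFun [] x q.1 * p x q.1 q.2

variable (Adm p) in
/-- `P_x^π[T = m]`. -/
noncomputable def hitProb (π : Policy S A Adm) (x z : S) (m : ℕ) : ℝ :=
  cylProb Adm p π x m (fun v => FirstExit (fun y => y ≠ z) v)

lemma pathProbAux_append (π : Policy S A Adm) :
    ∀ (l : List (A × S)) (h₁ h₂ : List (S × A)) (x : S),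
      pathProbAux Adm p π (h₁ ++ h₂) x l = pathProbAux Adm p (shiftPolicy Adm π h₁) h₂ x l
  | [], _, _, _ => rfl
  | (a, y) :: rest, h₁, h₂, x => by
      simp only [pathProbAux]
      rw [List.append_assoc, pathProbAux_append π rest h₁ (h₂ ++ [(x, a)]) y]
      rfl

lemma pathProb_cons (π : Policy S A Adm) (x : S) (q : A × S) (l : List (A × S)) :
    pathProb Adm p π x (q :: l) =
      stepProb Adm p π x q * pathProb Adm p (shiftPolicy Adm π [(x, q.1)]) q.2 l := by
  have h := pathProbAux_append (p := p) π l [(x, q.1)] [] q.2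
  rw [List.append_nil] at h
  rw [pathProb, pathProbAux, List.nil_append, h]
  rfl

lemma stepProb_nonneg (hp : IsStochastic Adm p) (π : Policy S A Adm) (x : S) (q : A × S) :
    0 ≤ stepProb Adm p π x q := by
  by_cases ha : q.1 ∈ Adm x
  · exact mul_nonneg (π.nonneg [] x q.1) ((hp x q.1 ha).1 q.2)
  · simp [stepProb, π.supp [] x q.1 ha]

lemma sum_stepProb (hp : IsStochastic Adm p) (π : Policy S A Adm) (x : S) :
    ∑ q, stepProb Adm p π x q = 1 := by
  have hrow : ∀ a, ∑ y, stepProb Adm p π x (a, y) = π.toFun [] x a := by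
    intro a
    by_cases ha : a ∈ Adm x
    · simp only [stepProb]
      rw [← Finset.mul_sum, (hp x a ha).2, mul_one]
    · simp [stepProb, π.supp [] x a ha]
  rw [Fintype.sum_prod_type, Finset.sum_congr rfl fun a _ => hrow a, π.sum_one]

lemma pathProb_nonneg (hp : IsStochastic Adm p) :
    ∀ (π : Policy S A Adm) (x : S) (l : List (A × S)), 0 ≤ pathProb Adm p π x l
  | _, _, [] => zero_le_one
  | π, x, q :: l => by
      rw [pathProb_cons]
      exact mul_nonneg (stepProb_nonneg hp π x q) (pathProb_nonneg hp _ _ l)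

lemma cylProb_nonneg (hp : IsStochastic Adm p) (π : Policy S A Adm) (x : S) (n : ℕ)
    (E : (Fin n → A × S) → Prop) : 0 ≤ cylProb Adm p π x n E :=
  Finset.sum_nonneg fun v _ => by
    split_ifs
    · exact pathProb_nonneg hp π x _
    · rfl

lemma cylProb_zero (π : Policy S A Adm) (x : S) (E : (Fin 0 → A × S) → Prop) :
    cylProb Adm p π x 0 E = if E Fin.elim0 then 1 else 0 := by
  rw [cylProb, Fintype.sum_subsingleton _ Fin.elim0]
  simp [pathProb, pathProbAux]

lemma cylProb_succ (π : Policy S A Adm) (x : S) (n : ℕ) (E : (Fin (n + 1) → A × S) → Prop) :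
    cylProb Adm p π x (n + 1) E =
      ∑ q, stepProb Adm p π x q *
        cylProb Adm p (shiftPolicy Adm π [(x, q.1)]) q.2 n (fun v => E (Fin.cons q v)) := by
  rw [cylProb, ← Equiv.sum_comp (Fin.consEquiv fun _ => A × S), Fintype.sum_prod_type]
  refine Finset.sum_congr rfl fun q _ => ?_
  rw [cylProb, Finset.mul_sum]
  refine Finset.sum_congr rfl fun v _ => ?_
  have hcons : (Fin.consEquiv fun _ => A × S) (q, v) = Fin.cons q v := rfl
  rw [hcons, List.ofFn_cons, pathProb_cons, mul_ite, mul_zero]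

lemma cylProb_congr {π : Policy S A Adm} {x : S} {n : ℕ} {E E' : (Fin n → A × S) → Prop}
    (h : ∀ v, E v ↔ E' v) : cylProb Adm p π x n E = cylProb Adm p π x n E' :=
  Finset.sum_congr rfl fun v _ => if_congr (h v) rfl rfl

lemma cylProb_const_and (π : Policy S A Adm) (x : S) {n : ℕ} (P : Prop)
    (E : (Fin n → A × S) → Prop) :
    cylProb Adm p π x n (fun v => P ∧ E v) = if P then cylProb Adm p π x n E else 0 := by
  by_cases hP : P <;> simp [cylProb, hP]

lemma survProb_zero (π : Policy S A Adm) (x z : S) : survProb Adm p π x z 0 = 1 := by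
  simp [survProb, cylProb_zero]

lemma survProb_succ (π : Policy S A Adm) (x z : S) (n : ℕ) :
    survProb Adm p π x z (n + 1) = ∑ q, stepProb Adm p π x q *
      (if q.2 = z then 0 else survProb Adm p (shiftPolicy Adm π [(x, q.1)]) q.2 z n) := by
  rw [survProb, cylProb_succ]
  refine Finset.sum_congr rfl fun q _ => ?_
  rw [cylProb_congr (E' := fun v => q.2 ≠ z ∧ ∀ t : Fin n, (v t).2 ≠ z)
    (fun v => by simp [Fin.forall_fin_succ]), cylProb_const_and]
  by_cases hq : q.2 = z <;> simp [hq, survProb]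

lemma hitProb_zero (π : Policy S A Adm) (x z : S) : hitProb Adm p π x z 0 = 0 := by
  simp [hitProb, cylProb_zero, FirstExit]

lemma hitProb_one (π : Policy S A Adm) (x z : S) :
    hitProb Adm p π x z 1 = ∑ q, stepProb Adm p π x q * (if q.2 = z then 1 else 0) := by
  rw [hitProb, cylProb_succ]
  refine Finset.sum_congr rfl fun q _ => ?_
  simp [cylProb_zero, FirstExit, Fin.forall_fin_one]

lemma hitProb_succ_succ (π : Policy S A Adm) (x z : S) (n : ℕ) :
    hitProb Adm p π x z (n + 2) = ∑ q, stepProb Adm p π x q *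
      (if q.2 = z then 0 else hitProb Adm p (shiftPolicy Adm π [(x, q.1)]) q.2 z (n + 1)) := by
  rw [hitProb, cylProb_succ]
  refine Finset.sum_congr rfl fun q _ => ?_
  rw [cylProb_congr (firstExit_cons_iff n.succ_pos q), cylProb_const_and]
  by_cases hq : q.2 = z <;> simp [hq, hitProb]

lemma survProb_eq_survProb_succ_add_hitProb (hp : IsStochastic Adm p) (z : S) :
    ∀ (n : ℕ) (π : Policy S A Adm) (x : S),
      survProb Adm p π x z n = survProb Adm p π x z (n + 1) + hitProb Adm p π x z (n + 1)
  | 0, π, x => by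
      rw [survProb_zero, survProb_succ, hitProb_one, ← Finset.sum_add_distrib]
      refine (sum_stepProb hp π x).symm.trans (Finset.sum_congr rfl fun q _ => ?_)
      by_cases hq : q.2 = z <;> simp [hq, survProb_zero]
  | n + 1, π, x => by
      rw [survProb_succ _ _ _ n, survProb_succ _ _ _ (n + 1), hitProb_succ_succ,
        ← Finset.sum_add_distrib]
      refine Finset.sum_congr rfl fun q _ => ?_
      rw [survProb_eq_survProb_succ_add_hitProb hp z n]
      by_cases hq : q.2 = z <;> simp [hq, mul_add]

lemma survProb_succ_le (hp : IsStochastic Adm p) (π : Policy S A Adm) (x z : S) (n : ℕ) :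
    survProb Adm p π x z (n + 1) ≤ survProb Adm p π x z n := by
  rw [survProb_eq_survProb_succ_add_hitProb hp z n π x]
  exact le_add_of_nonneg_right (cylProb_nonneg hp π x _ _)

lemma one_sub_survProb_eq_sum_hitProb (hp : IsStochastic Adm p) (π : Policy S A Adm)
    (x z : S) :
    ∀ N, 1 - survProb Adm p π x z N = ∑ m ∈ Finset.range (N + 1), hitProb Adm p π x z m
  | 0 => by simp [survProb_zero, hitProb_zero]
  | N + 1 => by
      rw [Finset.sum_range_succ, ← one_sub_survProb_eq_sum_hitProb hp π x z N,
        survProb_eq_survProb_succ_add_hitProb hp z N π x]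
      ring

/-- Markov's inequality for `T`, using that `P[T > n]` is nonincreasing in `n`. -/
lemma survProb_le_div_of_ExpT_le (hp : IsStochastic Adm p) {π : Policy S A Adm} {x z : S}
    {M : ℝ} (hM : 0 ≤ M) (hT : ExpT Adm p π x z ≤ ENNReal.ofReal M) (N : ℕ) :
    survProb Adm p π x z N ≤ M / (N + 1) := by
  have hanti : Antitone fun n => survProb Adm p π x z n :=
    antitone_nat_of_succ_le fun n => survProb_succ_le hp π x z n
  have hsum : ∑ n ∈ Finset.range (N + 1), survProb Adm p π x z n ≤ M := by
    rw [← ENNReal.ofReal_le_ofReal_iff hM,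
      ENNReal.ofReal_sum_of_nonneg (f := fun n => survProb Adm p π x z n)
        fun n _ => cylProb_nonneg hp π x n _]
    exact (ENNReal.sum_le_tsum _).trans hT
  have hlow : ∑ _n ∈ Finset.range (N + 1), survProb Adm p π x z N ≤
      ∑ n ∈ Finset.range (N + 1), survProb Adm p π x z n :=
    Finset.sum_le_sum fun n hn => hanti (Finset.mem_range_succ_iff.mp hn)
  rw [le_div_iff₀ (by positivity), mul_comm]
  simpa using hlow.trans hsum

lemma survProb_stationary_succ (f : S → A) (hf : ∀ s, f s ∈ Adm s) (x z : S) (n : ℕ) :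
    survProb Adm p (stationary Adm f hf) x z (n + 1) =
      ∑ y, if y = z then 0 else p x (f x) y * survProb Adm p (stationary Adm f hf) y z n := by
  have hshift : ∀ pre, shiftPolicy Adm (stationary Adm f hf) pre = stationary Adm f hf :=
    fun _ => rfl
  simp only [survProb_succ, hshift]
  simp only [Fintype.sum_prod_type, stepProb, stationary]
  rw [Finset.sum_comm]
  refine Finset.sum_congr rfl fun y _ => ?_
  by_cases hy : y = z <;> simp [hy]

lemma le_survProb_stationary (hp : IsStochastic Adm p) {z : S} {v : S → ℝ} (hv : v ≤ 1)
    (f : S → A) (hf : ∀ s, f s ∈ Adm s)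
    (hfv : ∀ x, v x = ∑ y, if y = z then 0 else p x (f x) y * v y) :
    ∀ (N : ℕ) (x : S), v x ≤ survProb Adm p (stationary Adm f hf) x z N
  | 0, x => (hv x).trans (survProb_zero _ x z).ge
  | N + 1, x => by
      rw [survProb_stationary_succ, hfv x]
      refine Finset.sum_le_sum fun y _ => ?_
      split_ifs
      · rfl
      · exact mul_le_mul_of_nonneg_left (le_survProb_stationary hp hv f hf hfv N y)
          ((hp x (f x) (hf x)).1 y)

/-- Randomizing the first action cannot beat the best deterministic one. -/
lemma sum_stepProb_mul_le_survBellman {hA : ∀ x, (Adm x).Nonempty} {z : S}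
    (π : Policy S A Adm) (u : S → ℝ) (x : S) :
    ∑ q, stepProb Adm p π x q * (if q.2 = z then 0 else u q.2) ≤ survBellman Adm p hA z u x := by
  have hrow : ∀ a, ∑ y, stepProb Adm p π x (a, y) * (if y = z then 0 else u y) ≤
      π.toFun [] x a * survBellman Adm p hA z u x := by
    intro a
    by_cases ha : a ∈ Adm x
    · calc ∑ y, stepProb Adm p π x (a, y) * (if y = z then 0 else u y)
          = π.toFun [] x a * ∑ y, (if y = z then 0 else p x a y * u y) := by
            rw [Finset.mul_sum]
            refine Finset.sum_congr rfl fun y _ => ?_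
            split_ifs <;> simp [stepProb, mul_assoc]
        _ ≤ π.toFun [] x a * survBellman Adm p hA z u x :=
            mul_le_mul_of_nonneg_left
              (Finset.le_sup' (fun a => ∑ y, if y = z then 0 else p x a y * u y) ha)
              (π.nonneg [] x a)
    · simp [stepProb, π.supp [] x a ha]
  calc _ ≤ ∑ a, π.toFun [] x a * survBellman Adm p hA z u x := by
        rw [Fintype.sum_prod_type]
        exact Finset.sum_le_sum fun a _ => hrow a
    _ = _ := by rw [← Finset.sum_mul, π.sum_one, one_mul]

lemma survProb_le_iterate_survBellman (hp : IsStochastic Adm p) {hA : ∀ x, (Adm x).Nonempty}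
    {z : S} : ∀ (N : ℕ) (π : Policy S A Adm) (x : S),
      survProb Adm p π x z N ≤ (survBellman Adm p hA z)^[N] 1 x
  | 0, π, x => (survProb_zero π x z).le
  | N + 1, π, x => by
      rw [survProb_succ, Function.iterate_succ_apply']
      refine le_trans (Finset.sum_le_sum fun q _ => ?_) (sum_stepProb_mul_le_survBellman π _ x)
      refine mul_le_mul_of_nonneg_left ?_ (stepProb_nonneg hp π x q)
      split_ifs
      · rfl
      · exact survProb_le_iterate_survBellman hp N _ q.2

lemma tendsto_iterate_survBellman_one (hp : IsStochastic Adm p) (hA : ∀ x, (Adm x).Nonempty)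
    {z : S} {M : ℝ} (hDoe : Doeblin Adm p z M) :
    Tendsto (fun N => (survBellman Adm p hA z)^[N] 1) atTop (𝓝 0) := by
  set 𝒯 := survBellman Adm p hA z
  have hanti : Antitone fun N => 𝒯^[N] 1 :=
    (monotone_survBellman hp).antitone_iterate_of_map_le (survBellman_one_le hp)
  have hnonneg : ∀ N, 0 ≤ 𝒯^[N] 1 := fun N => by
    have h := (monotone_survBellman (hA := hA) (z := z) hp).iterate N (zero_le_one' (S → ℝ))
    rwa [Function.iterate_fixed survBellman_zero] at h
  set v : S → ℝ := fun x => ⨅ N, 𝒯^[N] 1 x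
  have hlim : Tendsto (fun N => 𝒯^[N] 1) atTop (𝓝 v) :=
    tendsto_pi_nhds.2 fun x => tendsto_atTop_ciInf (fun m n h => hanti h x)
      ⟨0, by rintro _ ⟨N, rfl⟩; exact hnonneg N x⟩
  obtain ⟨f, hf, hfv⟩ := exists_maximizer_of_isFixedPt
    (isFixedPt_of_tendsto_iterate hlim continuous_survBellman.continuousAt)
  have hv_le : ∀ N x, v x ≤ survProb Adm p (stationary Adm f hf) x z N := fun N x =>
    le_survProb_stationary hp (le_of_tendsto' hlim fun N => hanti N.zero_le) f hf hfv N x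
  have hMarkov : Tendsto (fun N : ℕ => M / (N + 1)) atTop (𝓝 0) := by
    simpa [div_eq_mul_inv] using tendsto_one_div_add_atTop_nhds_zero_nat.const_mul M
  have hv : v = 0 := le_antisymm
    (fun x => ge_of_tendsto' hMarkov fun N => (hv_le N x).trans
      (survProb_le_div_of_ExpT_le hp hDoe.1.le (hDoe.2 x f hf) N))
    (ge_of_tendsto' hlim hnonneg)
  rwa [hv] at hlim

lemma exists_survProb_le_half (hp : IsStochastic Adm p) (hA : ∀ x, (Adm x).Nonempty)
    {z : S} {M : ℝ} (hDoe : Doeblin Adm p z M) :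
    ∃ N, ∀ (π : Policy S A Adm) (x : S), survProb Adm p π x z N ≤ 1 / 2 := by
  have hev : ∀ x, ∀ᶠ N in atTop, (survBellman Adm p hA z)^[N] 1 x ≤ 1 / 2 := fun x =>
    (tendsto_pi_nhds.1 (tendsto_iterate_survBellman_one hp hA hDoe) x).eventually
      (ge_mem_nhds (by norm_num))
  obtain ⟨N, hN⟩ := (eventually_all.2 hev).exists
  exact ⟨N, fun π x => (survProb_le_iterate_survBellman hp N π x).trans (hN x)⟩

lemma ofReal_exp_mul_hitProb_le (hp : IsStochastic Adm p) {w : S → A → ℝ} {L : ℝ}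
    (hL : L ≤ 0) (hw : ∀ s a, L ≤ w s a) (π : Policy S A Adm) (x z : S) {m N : ℕ}
    (hmN : m ≤ N) :
    ENNReal.ofReal (Real.exp (L * N) * hitProb Adm p π x z m) ≤
      ∑ v : Fin m → A × S, if FirstExit (fun y => y ≠ z) v then
        ENNReal.ofReal (pathProb Adm p π x (List.ofFn v) *
          Real.exp (costSum w x (List.ofFn v))) else 0 := by
  rw [hitProb, cylProb, Finset.mul_sum, ENNReal.ofReal_sum_of_nonneg fun v _ =>
    mul_nonneg (Real.exp_pos _).le (by split_ifs <;> simp [pathProb_nonneg hp])]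
  refine Finset.sum_le_sum fun v _ => ?_
  split_ifs
  · refine ENNReal.ofReal_le_ofReal ?_
    rw [mul_comm]
    refine mul_le_mul_of_nonneg_left (Real.exp_le_exp.2 ?_) (pathProb_nonneg hp π x _)
    calc L * N ≤ L * (List.ofFn v).length := by
          rw [List.length_ofFn]
          exact mul_le_mul_of_nonpos_left (by exact_mod_cast hmN) hL
      _ ≤ costSum w x (List.ofFn v) := mul_length_le_costSum hw x _
  · simp

lemma ofReal_exp_mul_one_sub_survProb_le_EhitExp (hp : IsStochastic Adm p) {w : S → A → ℝ}
    {L : ℝ} (hL : L ≤ 0) (hw : ∀ s a, L ≤ w s a) (π : Policy S A Adm) (x z : S) (N : ℕ) :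
    ENNReal.ofReal (Real.exp (L * N) * (1 - survProb Adm p π x z N)) ≤ EhitExp Adm p π x z w :=
  calc _ = ∑ m ∈ Finset.range (N + 1),
        ENNReal.ofReal (Real.exp (L * N) * hitProb Adm p π x z m) := by
        rw [one_sub_survProb_eq_sum_hitProb hp, Finset.mul_sum, ENNReal.ofReal_sum_of_nonneg
          (f := fun m => Real.exp (L * N) * hitProb Adm p π x z m)
          fun m _ => mul_nonneg (Real.exp_pos _).le (cylProb_nonneg hp π x m _)]
    _ ≤ _ := Finset.sum_le_sum fun m hm =>
        ofReal_exp_mul_hitProb_le hp hL hw π x z (Finset.mem_range_succ_iff.mp hm)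
    _ ≤ EhitExp Adm p π x z w := ENNReal.sum_le_tsum _

end Policies

variable [Fintype S] [Fintype A]
variable (Adm : S → Finset A) (p : S → A → S → ℝ) (C : S → A → ℝ) (lam : ℝ)

theorem uniform_lower_bound
    (hA : ∀ x, (Adm x).Nonempty)
    (hp : ∀ (x : S), ∀ a ∈ Adm x, (∀ y, 0 ≤ p x a y) ∧ (∑ y, p x a y) = 1)
    (α : ℝ)
    (z : S) (M : ℝ) (hDoe : Doeblin Adm p z M) :
    ∃ B₀ > (0 : ℝ), ∀ (x : S) (π : Policy S A Adm),
      ENNReal.ofReal B₀ ≤ EhitExp Adm p π x z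
        (fun s a => lam * α * (C s a - Jopt Adm p C lam s)) := by
  obtain ⟨N, hN⟩ := exists_survProb_le_half hp hA hDoe
  obtain ⟨L, hL⟩ := (Set.finite_range fun q : S × A =>
    lam * α * (C q.1 q.2 - Jopt Adm p C lam q.1)).bddBelow
  refine ⟨Real.exp (min L 0 * N) / 2, by positivity, fun x π => ?_⟩
  calc ENNReal.ofReal (Real.exp (min L 0 * N) / 2)
      ≤ ENNReal.ofReal (Real.exp (min L 0 * N) * (1 - survProb Adm p π x z N)) :=
        ENNReal.ofReal_le_ofReal (by nlinarith [hN π x, Real.exp_pos (min L 0 * N)])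
    _ ≤ _ := ofReal_exp_mul_one_sub_survProb_le_EhitExp hp (min_le_right L 0)
        (fun s a => (min_le_left L 0).trans (hL ⟨(s, a), rfl⟩)) π x z N

end RiskSensitive
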